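/- arXiv:2410.05242 — 4 statements merged into one kernel-verified Lean document; each statement's English description precedes it below -/
import Mathlib

section
/- Let X_• be a left n-exact sequence in C and F := Cok(Hom_C(−, d_1^X)). Then X_• is an n-exact sequence (i.e., also a right n-exact sequence) if and only if Ext^i_{mod C}(F, Hom_C(−, Y)) = 0 for all 0 ≤ i ≤ n and all Y ∈ C. -/
/-!
Left n-exactness of `X` says that `0 → Hom(−, X_{n+1}) → ⋯ → Hom(−, X_0) → F → 0` is exact;
extended by zeros it is a projective resolution of `F` in `mod C` by representable functors.
By Yoneda, applying `Hom(−, Hom(−, Y))` to it gives back the complex `Hom(X_•, Y)`, so `Ext^0`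
vanishes iff `Hom(d_0, Y)` is injective and `Ext^{i+1}` vanishes iff `Hom(X_•, Y)` is exact at
`X_{i+1}`. That `Ext` does not depend on the resolution is the comparison theorem: representable
functors are projective for pointwise surjections, so two resolutions admit chain maps over `F`
in both directions, and their composite is homotopic to the identity.
-/

open CategoryTheory CategoryTheory.Limits

universe v u

/-- Vanishing of `Ext^i_{mod C}(F, Hom_C(−, Y))`, computed via (all) projective
resolutions of `F` by representable functors. -/
def ExtVanish {C : Type u} [Category.{v} C] [Preadditive C]
    (F : Cᵒᵖ ⥤ AddCommGrpCat.{v}) (Y : C) : ℕ → Prop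
  | 0 => ∀ φ : F ⟶ preadditiveYoneda.obj Y, φ = 0
  | (j + 1) =>
    ∀ (K : ℕ → C)
      (δ : ∀ m, preadditiveYoneda.obj (K (m + 1)) ⟶ preadditiveYoneda.obj (K m))
      (ε : preadditiveYoneda.obj (K 0) ⟶ F),
      (∀ c : Cᵒᵖ, Function.Surjective ⇑(ε.app c)) →
      (∀ c : Cᵒᵖ, Function.Exact ⇑((δ 0).app c) ⇑(ε.app c)) →
      (∀ m (c : Cᵒᵖ), Function.Exact ⇑((δ (m + 1)).app c) ⇑((δ m).app c)) →
      Function.Exact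
        (fun g : preadditiveYoneda.obj (K j) ⟶ preadditiveYoneda.obj Y => δ j ≫ g)
        (fun g : preadditiveYoneda.obj (K (j + 1)) ⟶ preadditiveYoneda.obj Y =>
          δ (j + 1) ≫ g)

open Opposite ZeroObject

theorem exists_seq_of_exists_step {α : ℕ → Type*} (R : ∀ m, α m → α (m + 1) → Prop)
    {a₀ : α 0} {a₁ : α 1} (h₀ : R 0 a₀ a₁)
    (step : ∀ m a b, R m a b → ∃ c, R (m + 1) b c) :
    ∃ f : ∀ m, α m, f 0 = a₀ ∧ ∀ m, R m (f m) (f (m + 1)) := by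
  choose next hnext using step
  let pairs : ∀ m, {p : α m × α (m + 1) // R m p.1 p.2} := fun m =>
    Nat.rec ⟨(a₀, a₁), h₀⟩
      (fun m p => ⟨(p.1.2, next m _ _ p.2), hnext m _ _ p.2⟩) m
  exact ⟨fun m => (pairs m).1.1, rfl, fun m => (pairs m).2⟩

namespace RepresentableResolution

section Resolutions

variable {C : Type u} [Category.{v} C] [Preadditive C]

section Yoneda

variable {A B : C} {G : Cᵒᵖ ⥤ AddCommGrpCat.{v}}

lemma preadditiveYoneda_app_apply (α : preadditiveYoneda.obj A ⟶ G) {c : Cᵒᵖ}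
    (x : c.unop ⟶ A) : α.app c x = G.map x.op (α.app (op A) (𝟙 A)) := by
  have h := ConcreteCategory.congr_hom (α.naturality x.op) (𝟙 A)
  calc α.app c x = α.app c (x ≫ 𝟙 A) := by rw [Category.comp_id]
    _ = _ := h

lemma preadditiveYoneda_hom_ext {α β : preadditiveYoneda.obj A ⟶ G}
    (h : α.app (op A) (𝟙 A) = β.app (op A) (𝟙 A)) : α = β := by
  ext c x
  rw [preadditiveYoneda_app_apply α x, preadditiveYoneda_app_apply β x, h]

lemma preadditiveYoneda_map_comp_app_id (f : A ⟶ B) (α : preadditiveYoneda.obj B ⟶ G) :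
    (preadditiveYoneda.map f ≫ α).app (op A) (𝟙 A) = α.app (op A) f :=
  congrArg (α.app (op A)) (Category.id_comp f)

lemma exists_comp_eq_of_surjective {w : preadditiveYoneda.obj B ⟶ G}
    (hw : ∀ c, Function.Surjective (w.app c)) (α : preadditiveYoneda.obj A ⟶ G) :
    ∃ β : preadditiveYoneda.obj A ⟶ preadditiveYoneda.obj B, β ≫ w = α := by
  obtain ⟨z, hz⟩ := hw (op A) (α.app (op A) (𝟙 A))
  exact ⟨preadditiveYoneda.map z, preadditiveYoneda_hom_ext
    ((preadditiveYoneda_map_comp_app_id z w).trans hz)⟩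

lemma exists_comp_eq_of_exact {N : Cᵒᵖ ⥤ AddCommGrpCat.{v}} {u : preadditiveYoneda.obj B ⟶ N}
    {w : N ⟶ G} (h : ∀ c, Function.Exact (u.app c) (w.app c))
    (α : preadditiveYoneda.obj A ⟶ N) (hα : α ≫ w = 0) :
    ∃ β : preadditiveYoneda.obj A ⟶ preadditiveYoneda.obj B, β ≫ u = α := by
  obtain ⟨z, hz⟩ := (h (op A) (α.app (op A) (𝟙 A))).mp
    (congrArg (fun γ : preadditiveYoneda.obj A ⟶ G => γ.app (op A) (𝟙 A)) hα)
  exact ⟨preadditiveYoneda.map z, preadditiveYoneda_hom_ext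
    ((preadditiveYoneda_map_comp_app_id z u).trans hz)⟩

end Yoneda

lemma cokernel_π_app_surjective {J : Type*} [Category J] {M N : J ⥤ AddCommGrpCat.{v}}
    (φ : M ⟶ N) (c : J) : Function.Surjective ((cokernel.π φ).app c) :=
  (AddCommGrpCat.epi_iff_surjective _).mp inferInstance

lemma exact_app_cokernel_π {J : Type*} [Category J] {M N : J ⥤ AddCommGrpCat.{v}}
    (φ : M ⟶ N) (c : J) : Function.Exact (φ.app c) ((cokernel.π φ).app c) := by
  have h := ((ShortComplex.mk φ (cokernel.π φ) (cokernel.condition φ)).exact_of_g_is_cokernel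
    (cokernelIsCokernel φ)).map ((evaluation J AddCommGrpCat.{v}).obj c)
  rwa [ShortComplex.ab_exact_iff_function_exact] at h

lemma comp_eq_zero_of_exact_app {J : Type*} [Category J] {L M N : J ⥤ AddCommGrpCat.{v}}
    {u : L ⟶ M} {w : M ⟶ N} (h : ∀ c, Function.Exact (u.app c) (w.app c)) : u ≫ w = 0 := by
  ext c x
  exact (h c).apply_apply_eq_zero x

structure IsRepresentableResolution (F : Cᵒᵖ ⥤ AddCommGrpCat.{v}) {K : ℕ → C}
    (δ : ∀ m, preadditiveYoneda.obj (K (m + 1)) ⟶ preadditiveYoneda.obj (K m))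
    (ε : preadditiveYoneda.obj (K 0) ⟶ F) : Prop where
  surjective : ∀ c, Function.Surjective (ε.app c)
  exact_zero : ∀ c, Function.Exact ((δ 0).app c) (ε.app c)
  exact_succ : ∀ m c, Function.Exact ((δ (m + 1)).app c) ((δ m).app c)

/-- Exactness of `Hom(Hom(−, K_•), Hom(−, Y))` at `K_{j+1}`, the spot computing `Ext^{j+1}`. -/
def IsHomExactAt {K : ℕ → C}
    (δ : ∀ m, preadditiveYoneda.obj (K (m + 1)) ⟶ preadditiveYoneda.obj (K m))
    (Y : C) (j : ℕ) : Prop :=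
  Function.Exact (fun g : preadditiveYoneda.obj (K j) ⟶ preadditiveYoneda.obj Y => δ j ≫ g)
    (fun g : preadditiveYoneda.obj (K (j + 1)) ⟶ preadditiveYoneda.obj Y => δ (j + 1) ≫ g)

namespace IsRepresentableResolution

variable {F : Cᵒᵖ ⥤ AddCommGrpCat.{v}}
  {K : ℕ → C} {δ : ∀ m, preadditiveYoneda.obj (K (m + 1)) ⟶ preadditiveYoneda.obj (K m)}
  {ε : preadditiveYoneda.obj (K 0) ⟶ F}
  {P : ℕ → C} {δP : ∀ m, preadditiveYoneda.obj (P (m + 1)) ⟶ preadditiveYoneda.obj (P m)}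
  {εP : preadditiveYoneda.obj (P 0) ⟶ F}

lemma δ_comp_ε (hK : IsRepresentableResolution F δ ε) : δ 0 ≫ ε = 0 :=
  comp_eq_zero_of_exact_app hK.exact_zero

lemma δ_comp_δ (hK : IsRepresentableResolution F δ ε) (m : ℕ) : δ (m + 1) ≫ δ m = 0 :=
  comp_eq_zero_of_exact_app (hK.exact_succ m)

lemma exists_chainMap (hP : IsRepresentableResolution F δP εP)
    (hK : IsRepresentableResolution F δ ε) :
    ∃ f : ∀ m, preadditiveYoneda.obj (P m) ⟶ preadditiveYoneda.obj (K m),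
      f 0 ≫ ε = εP ∧ ∀ m, f (m + 1) ≫ δ m = δP m ≫ f m := by
  obtain ⟨f₀, hf₀⟩ := exists_comp_eq_of_surjective hK.surjective εP
  obtain ⟨f₁, hf₁⟩ := exists_comp_eq_of_exact hK.exact_zero (δP 0 ≫ f₀)
    (by rw [Category.assoc, hf₀, hP.δ_comp_ε])
  obtain ⟨f, rfl, hf⟩ := exists_seq_of_exists_step
    (fun m (a : preadditiveYoneda.obj (P m) ⟶ preadditiveYoneda.obj (K m)) b =>
      b ≫ δ m = δP m ≫ a) hf₁
    (fun m a b hab => exists_comp_eq_of_exact (hK.exact_succ m) _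
      (by rw [Category.assoc, hab, reassoc_of% hP.δ_comp_δ m, zero_comp]))
  exact ⟨f, hf₀, hf⟩

lemma exists_nullHomotopy (hK : IsRepresentableResolution F δ ε)
    (φ : ∀ m, preadditiveYoneda.obj (K m) ⟶ preadditiveYoneda.obj (K m))
    (hφ₀ : φ 0 ≫ ε = 0) (hφ : ∀ m, φ (m + 1) ≫ δ m = δ m ≫ φ m) :
    ∃ s : ∀ m, preadditiveYoneda.obj (K m) ⟶ preadditiveYoneda.obj (K (m + 1)),
      s 0 ≫ δ 0 = φ 0 ∧ ∀ m, s (m + 1) ≫ δ (m + 1) = φ (m + 1) - δ m ≫ s m := by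
  obtain ⟨s₀, hs₀⟩ := exists_comp_eq_of_exact hK.exact_zero (φ 0) hφ₀
  obtain ⟨s₁, hs₁⟩ := exists_comp_eq_of_exact (hK.exact_succ 0) (φ 1 - δ 0 ≫ s₀)
    (by rw [Preadditive.sub_comp, hφ, Category.assoc, hs₀, sub_self])
  obtain ⟨s, rfl, hs⟩ := exists_seq_of_exists_step
    (fun m (a : preadditiveYoneda.obj (K m) ⟶ preadditiveYoneda.obj (K (m + 1))) b =>
      b ≫ δ (m + 1) = φ (m + 1) - δ m ≫ a) hs₁
    (fun m a b hab => exists_comp_eq_of_exact (hK.exact_succ (m + 1)) _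
      (by rw [Preadditive.sub_comp, hφ, Category.assoc, hab, Preadditive.comp_sub,
        reassoc_of% hK.δ_comp_δ m, zero_comp, sub_zero, sub_self]))
  exact ⟨s, hs₀, hs⟩

lemma isHomExactAt (hP : IsRepresentableResolution F δP εP)
    (hK : IsRepresentableResolution F δ ε) {Y : C} {j : ℕ} (h : IsHomExactAt δP Y j) :
    IsHomExactAt δ Y j := by
  obtain ⟨f, hf₀, hf⟩ := exists_chainMap hP hK
  obtain ⟨g, hg₀, hg⟩ := exists_chainMap hK hP
  obtain ⟨s, -, hs⟩ := hK.exists_nullHomotopy (fun m => 𝟙 _ - g m ≫ f m)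
    (by rw [Preadditive.sub_comp, Category.assoc, hf₀, hg₀, Category.id_comp, sub_self])
    (fun m => by
      rw [Preadditive.sub_comp, Preadditive.comp_sub, Category.assoc, hf, reassoc_of% hg,
        Category.id_comp, Category.comp_id])
  have hδs : δ j ≫ s j = 𝟙 _ - g (j + 1) ≫ f (j + 1) - s (j + 1) ≫ δ (j + 1) := by
    rw [hs j, sub_sub_cancel]
  intro u
  constructor
  · intro (hu : δ (j + 1) ≫ u = 0)
    obtain ⟨w, hw : δP j ≫ w = f (j + 1) ≫ u⟩ := (h (f (j + 1) ≫ u)).mp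
      (show δP (j + 1) ≫ f (j + 1) ≫ u = 0 by rw [← reassoc_of% hf, hu, comp_zero])
    -- `δ ≫ s + s ≫ δ = 𝟙 - g ≫ f` corrects `g j ≫ w` into a preimage of `u`
    refine ⟨g j ≫ w + s j ≫ u, ?_⟩
    calc δ j ≫ (g j ≫ w + s j ≫ u)
        = g (j + 1) ≫ f (j + 1) ≫ u + (δ j ≫ s j) ≫ u := by
          rw [Preadditive.comp_add, ← reassoc_of% hg, hw, Category.assoc]
      _ = u := by
          rw [hδs, Preadditive.sub_comp, Preadditive.sub_comp, Category.assoc, Category.assoc,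
            hu, comp_zero, sub_zero, Category.id_comp, add_sub_cancel]
  · rintro ⟨v, rfl⟩
    exact (reassoc_of% hK.δ_comp_δ j) v |>.trans zero_comp

end IsRepresentableResolution

lemma extVanish_succ_iff {F : Cᵒᵖ ⥤ AddCommGrpCat.{v}} {P : ℕ → C}
    {δ : ∀ m, preadditiveYoneda.obj (P (m + 1)) ⟶ preadditiveYoneda.obj (P m)}
    {ε : preadditiveYoneda.obj (P 0) ⟶ F} (hP : IsRepresentableResolution F δ ε) (Y : C) (j : ℕ) :
    ExtVanish F Y (j + 1) ↔ IsHomExactAt δ Y j :=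
  ⟨fun h => h P δ ε hP.1 hP.2 hP.3, fun h _ _ _ h₁ h₂ h₃ => hP.isHomExactAt ⟨h₁, h₂, h₃⟩ h⟩

lemma extVanish_zero_cokernel_iff {A B : C} (f : A ⟶ B) (Y : C) :
    ExtVanish (cokernel (preadditiveYoneda.map f)) Y 0 ↔
      Function.Injective (fun g : B ⟶ Y => f ≫ g) := by
  change (∀ φ, φ = 0) ↔ Function.Injective (Preadditive.leftComp Y f)
  rw [injective_iff_map_eq_zero]
  constructor
  · intro h g (hg : f ≫ g = 0)
    have hw : preadditiveYoneda.map f ≫ preadditiveYoneda.map g = 0 := by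
      rw [← Functor.map_comp, hg, Functor.map_zero]
    apply preadditiveYoneda.map_injective
    rw [← cokernel.π_desc _ _ hw, h (cokernel.desc _ _ hw), comp_zero, Functor.map_zero]
  · intro hf φ
    obtain ⟨g, hg⟩ := preadditiveYoneda.map_surjective (cokernel.π (preadditiveYoneda.map f) ≫ φ)
    have hg₀ : g = 0 := hf g (preadditiveYoneda.map_injective
      (show preadditiveYoneda.map (f ≫ g) = _ by
        rw [Functor.map_comp, hg, cokernel.condition_assoc, Functor.map_zero, zero_comp]))
    rw [← cancel_epi (cokernel.π (preadditiveYoneda.map f)), ← hg, hg₀, Functor.map_zero,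
      comp_zero]

lemma isHomExactAt_map_iff {K : ℕ → C} (p : ∀ m, K (m + 1) ⟶ K m) (Y : C) (j : ℕ) :
    IsHomExactAt (fun m => preadditiveYoneda.map (p m)) Y j ↔
      Function.Exact (fun u : K j ⟶ Y => p j ≫ u) (fun u : K (j + 1) ⟶ Y => p (j + 1) ≫ u) := by
  simp only [IsHomExactAt, Function.Exact, Set.mem_range,
    preadditiveYoneda.map_surjective.forall, preadditiveYoneda.map_surjective.exists,
    ← Functor.map_comp, preadditiveYoneda.map_eq_zero_iff, preadditiveYoneda.map_injective.eq_iff]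

section EqToHom

variable {A A' B B' D D' : C}

lemma exact_map_app_eqToHom_conj_iff (hA : A' = A) (hB : B' = B) (hD : D' = D)
    (f : A ⟶ B) (g : B ⟶ D) (c : Cᵒᵖ) :
    Function.Exact ((preadditiveYoneda.map (eqToHom hA ≫ f ≫ eqToHom hB.symm)).app c)
        ((preadditiveYoneda.map (eqToHom hB ≫ g ≫ eqToHom hD.symm)).app c) ↔
      Function.Exact ((preadditiveYoneda.map f).app c) ((preadditiveYoneda.map g).app c) := by
  subst hA hB hD; simp

lemma exact_map_app_eqToHom_conj_comp_iff {G : Cᵒᵖ ⥤ AddCommGrpCat.{v}} (hB : B' = B)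
    (hD : D' = D) (f : B ⟶ D) (ε : preadditiveYoneda.obj D ⟶ G) (c : Cᵒᵖ) :
    Function.Exact ((preadditiveYoneda.map (eqToHom hB ≫ f ≫ eqToHom hD.symm)).app c)
        ((preadditiveYoneda.map (eqToHom hD) ≫ ε).app c) ↔
      Function.Exact ((preadditiveYoneda.map f).app c) (ε.app c) := by
  subst hB hD; simp

lemma surjective_map_eqToHom_comp_app_iff {G : Cᵒᵖ ⥤ AddCommGrpCat.{v}} (hD : D' = D)
    (ε : preadditiveYoneda.obj D ⟶ G) (c : Cᵒᵖ) :
    Function.Surjective ((preadditiveYoneda.map (eqToHom hD) ≫ ε).app c) ↔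
      Function.Surjective (ε.app c) := by
  subst hD; simp

lemma injective_map_app_eqToHom_conj_iff (hB : B' = B) (hD : D' = D) (f : B ⟶ D) (c : Cᵒᵖ) :
    Function.Injective ((preadditiveYoneda.map (eqToHom hB ≫ f ≫ eqToHom hD.symm)).app c) ↔
      Function.Injective ((preadditiveYoneda.map f).app c) := by
  subst hB hD; simp

lemma exact_eqToHom_conj_iff (hA : A' = A) (hB : B' = B) (hD : D' = D)
    (f : A ⟶ B) (g : B ⟶ D) (Y : C) :
    Function.Exact (fun u : D' ⟶ Y => (eqToHom hB ≫ g ≫ eqToHom hD.symm) ≫ u)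
        (fun u : B' ⟶ Y => (eqToHom hA ≫ f ≫ eqToHom hB.symm) ≫ u) ↔
      Function.Exact (fun u : D ⟶ Y => g ≫ u) (fun u : B ⟶ Y => f ≫ u) := by
  subst hA hB hD; simp

end EqToHom

end Resolutions

section ZeroPadding

variable {C : Type u} [Category.{v} C] [HasZeroObject C]

noncomputable def padObj (N : ℕ) (X : ℕ → C) (m : ℕ) : C := if m ≤ N + 1 then X m else 0

lemma padObj_of_le {N m : ℕ} (X : ℕ → C) (h : m ≤ N + 1) : padObj N X m = X m := if_pos h

lemma isZero_padObj {N m : ℕ} (X : ℕ → C) (h : N + 1 < m) : IsZero (padObj N X m) := by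
  rw [padObj, if_neg (by omega)]
  exact isZero_zero C

end ZeroPadding

section Padding

variable {C : Type u} [Category.{v} C] [Preadditive C] [HasZeroObject C]

noncomputable def padMap (N : ℕ) {X : ℕ → C} (d : ∀ i, X (i + 1) ⟶ X i) (m : ℕ) :
    padObj N X (m + 1) ⟶ padObj N X m :=
  if h : m ≤ N then
    eqToHom (padObj_of_le X (by omega)) ≫ d m ≫ eqToHom (padObj_of_le X (by omega)).symm
  else 0

variable (N : ℕ) {X : ℕ → C} (d : ∀ i, X (i + 1) ⟶ X i)

lemma padMap_of_le {m : ℕ} (h : m ≤ N) :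
    padMap N d m =
      eqToHom (padObj_of_le X (by omega)) ≫ d m ≫ eqToHom (padObj_of_le X (by omega)).symm :=
  dif_pos h

lemma padMap_of_lt {m : ℕ} (h : N < m) : padMap N d m = 0 :=
  dif_neg (by omega)

theorem isRepresentableResolution_padMap {F : Cᵒᵖ ⥤ AddCommGrpCat.{v}}
    (ε : preadditiveYoneda.obj (X 0) ⟶ F)
    (hε : ∀ c, Function.Surjective (ε.app c))
    (hε₀ : ∀ c, Function.Exact ((preadditiveYoneda.map (d 0)).app c) (ε.app c))
    (hexact : ∀ i < N, ∀ c : Cᵒᵖ, Function.Exact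
      ((preadditiveYoneda.map (d (i + 1))).app c) ((preadditiveYoneda.map (d i)).app c))
    (hmono : ∀ c : Cᵒᵖ, Function.Injective ((preadditiveYoneda.map (d N)).app c)) :
    IsRepresentableResolution F (fun m => preadditiveYoneda.map (padMap N d m))
      (preadditiveYoneda.map (eqToHom (padObj_of_le X (Nat.zero_le _))) ≫ ε) where
  surjective c := (surjective_map_eqToHom_comp_app_iff _ ε c).2 (hε c)
  exact_zero c := by
    rw [padMap_of_le N d (Nat.zero_le N)]
    exact (exact_map_app_eqToHom_conj_comp_iff _ _ _ ε c).2 (hε₀ c)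
  exact_succ m c := by
    rcases lt_trichotomy m N with hm | rfl | hm
    · rw [padMap_of_le N d hm, padMap_of_le N d hm.le]
      exact (exact_map_app_eqToHom_conj_iff _ _ (padObj_of_le X (by omega)) _ _ c).2
        (hexact m hm c)
    · have hinj := (injective_map_app_eqToHom_conj_iff (padObj_of_le (N := m) X (by omega))
        (padObj_of_le (N := m) X (by omega)) (d m) c).2 (hmono c)
      rw [padMap_of_lt m d (Nat.lt_succ_self m), padMap_of_le m d le_rfl, Functor.map_zero]
      intro x
      rw [map_eq_zero_iff _ hinj]
      simp [eq_comm]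
    · intro x
      obtain rfl : x = 0 := (isZero_padObj X (by omega)).eq_of_tgt _ _
      simp only [map_zero, true_iff]
      exact ⟨0, map_zero _⟩

lemma isHomExactAt_padMap_iff {j : ℕ} (hj : j < N) (Y : C) :
    IsHomExactAt (fun m => preadditiveYoneda.map (padMap N d m)) Y j ↔
      Function.Exact (fun u : X j ⟶ Y => d j ≫ u) (fun u : X (j + 1) ⟶ Y => d (j + 1) ≫ u) := by
  rw [isHomExactAt_map_iff, padMap_of_le N d hj.le, padMap_of_le N d hj]
  exact exact_eqToHom_conj_iff _ _ (padObj_of_le X (by omega)) _ _ Y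

end Padding

end RepresentableResolution

open RepresentableResolution

theorem stmt9_general {C : Type u} [Category.{v} C] [Preadditive C]
    [HasZeroObject C]
    (n : ℕ) (X : ℕ → C) (d : ∀ i, X (i + 1) ⟶ X i)
    -- X_• is a left n-exact sequence:
    (hleft_exact : ∀ i, i < n → ∀ c : Cᵒᵖ, Function.Exact
      ⇑((preadditiveYoneda.map (d (i + 1))).app c)
      ⇑((preadditiveYoneda.map (d i)).app c))
    (hleft_mono : ∀ c : Cᵒᵖ, Function.Injective
      ⇑((preadditiveYoneda.map (d n)).app c)) :
    -- X_• is a right n-exact sequence: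
    ((∀ Y : C, Function.Injective (fun g : X 0 ⟶ Y => d 0 ≫ g)) ∧
     (∀ (Y : C) i, i < n → Function.Exact
        (fun g : X i ⟶ Y => d i ≫ g) (fun g : X (i + 1) ⟶ Y => d (i + 1) ≫ g)))
    ↔
    (∀ (Y : C) (i : ℕ), i ≤ n →
      ExtVanish (cokernel (preadditiveYoneda.map (d 0))) Y i) := by
  have hres := isRepresentableResolution_padMap n d _ (cokernel_π_app_surjective _)
    (exact_app_cokernel_π _) hleft_exact hleft_mono
  constructor
  · rintro ⟨hinj, hexact⟩ Y (_ | j) hj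
    · exact (extVanish_zero_cokernel_iff (d 0) Y).2 (hinj Y)
    · exact (extVanish_succ_iff hres Y j).2
        ((isHomExactAt_padMap_iff n d hj Y).2 (hexact Y j hj))
  · intro hvan
    exact ⟨fun Y => (extVanish_zero_cokernel_iff (d 0) Y).1 (hvan Y 0 n.zero_le),
      fun Y j hj => (isHomExactAt_padMap_iff n d hj Y).1
        ((extVanish_succ_iff hres Y j).1 (hvan Y (j + 1) hj))⟩

theorem stmt9 {C : Type u} [Category.{v} C] [Preadditive C]
    [HasZeroObject C] [HasBinaryBiproducts C] [IsIdempotentComplete C]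
    (n : ℕ) (hn : 1 ≤ n) (X : ℕ → C) (d : ∀ i, X (i + 1) ⟶ X i)
    -- X_• is a left n-exact sequence:
    (hleft_exact : ∀ i, i < n → ∀ c : Cᵒᵖ, Function.Exact
      ⇑((preadditiveYoneda.map (d (i + 1))).app c)
      ⇑((preadditiveYoneda.map (d i)).app c))
    (hleft_mono : ∀ c : Cᵒᵖ, Function.Injective
      ⇑((preadditiveYoneda.map (d n)).app c)) :
    -- X_• is a right n-exact sequence:
    ((∀ Y : C, Function.Injective (fun g : X 0 ⟶ Y => d 0 ≫ g)) ∧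
     (∀ (Y : C) i, i < n → Function.Exact
        (fun g : X i ⟶ Y => d i ≫ g) (fun g : X (i + 1) ⟶ Y => d (i + 1) ≫ g)))
    ↔
    (∀ (Y : C) (i : ℕ), i ≤ n →
      ExtVanish (cokernel (preadditiveYoneda.map (d 0))) Y i) :=
  stmt9_general n X d hleft_exact hleft_mono
end

section
/- In an exact category E with enough projectives P, any object M with pdim_E M ≤ n+1 and Ext^i_E(M, P) = 0 for all P ∈ P and all 0 ≤ i ≤ n satisfies either M = 0 or pdim_E M = n+1. -/
/-!
STATEMENT 10: in an exact category E with enough projectives, any object M with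
pdim M ≤ n+1 and Ext^i(M, P) = 0 for all projectives P and all 0 ≤ i ≤ n satisfies
M = 0 or pdim M = n+1.
We formalize a Quillen exact structure on an additive category E as a class of
kernel–cokernel pairs (conflations) satisfying the usual axioms. Projective
dimension is defined by iterated syzygies along conflations with projective middle
term; Ext-vanishing is defined by dimension shifting (Ext⁰ = Hom, Ext¹-vanishing =
the lifting property along conflations with projective middle term).
-/

open CategoryTheory CategoryTheory.Limits

universe v u

/-- A Quillen exact structure on the additive category `E`: a class of
kernel–cokernel pairs (conflations) containing the split conflations, closed under
isomorphism, with inflations and deflations closed under composition, deflations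
stable under pullback and inflations stable under pushout. -/
structure ExactStructure (E : Type u) [Category.{v} E] [Preadditive E]
    [HasZeroObject E] [HasBinaryBiproducts E] where
  conf : ∀ ⦃A B Z : E⦄, (A ⟶ B) → (B ⟶ Z) → Prop
  comp_zero : ∀ ⦃A B Z : E⦄ {i : A ⟶ B} {p : B ⟶ Z}, conf i p → i ≫ p = 0
  isKernel : ∀ ⦃A B Z : E⦄ {i : A ⟶ B} {p : B ⟶ Z} (h : conf i p),
    Nonempty (IsLimit (KernelFork.ofι i (comp_zero h)))
  isCokernel : ∀ ⦃A B Z : E⦄ {i : A ⟶ B} {p : B ⟶ Z} (h : conf i p),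
    Nonempty (IsColimit (CokernelCofork.ofπ p (comp_zero h)))
  split : ∀ A B : E, conf (biprod.inl : A ⟶ A ⊞ B) (biprod.snd : A ⊞ B ⟶ B)
  iso_closed : ∀ ⦃A B Z A' B' Z' : E⦄ {i : A ⟶ B} {p : B ⟶ Z}, conf i p →
    ∀ (eA : A ≅ A') (eB : B ≅ B') (eZ : Z ≅ Z') (i' : A' ⟶ B') (p' : B' ⟶ Z'),
      eA.hom ≫ i' = i ≫ eB.hom → eB.hom ≫ p' = p ≫ eZ.hom → conf i' p'
  infl_comp : ∀ ⦃A B B' : E⦄ (i : A ⟶ B) (j : B ⟶ B'),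
    (∃ (Z : E) (p : B ⟶ Z), conf i p) → (∃ (Z : E) (p : B' ⟶ Z), conf j p) →
    ∃ (Z : E) (p : B' ⟶ Z), conf (i ≫ j) p
  defl_comp : ∀ ⦃B Z Z' : E⦄ (p : B ⟶ Z) (q : Z ⟶ Z'),
    (∃ (A : E) (i : A ⟶ B), conf i p) → (∃ (A : E) (i : A ⟶ Z), conf i q) →
    ∃ (A : E) (i : A ⟶ B), conf i (p ≫ q)
  pullback_defl : ∀ ⦃B Z Z' : E⦄ (p : B ⟶ Z) (h : Z' ⟶ Z),
    (∃ (A : E) (i : A ⟶ B), conf i p) →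
    ∃ (B' : E) (q : B' ⟶ B) (p' : B' ⟶ Z'),
      (∃ (A' : E) (i' : A' ⟶ B'), conf i' p') ∧ IsPullback q p' p h
  pushout_infl : ∀ ⦃A B A' : E⦄ (i : A ⟶ B) (f : A ⟶ A'),
    (∃ (Z : E) (p : B ⟶ Z), conf i p) →
    ∃ (B' : E) (i' : A' ⟶ B') (g : B ⟶ B'),
      (∃ (Z' : E) (p' : B' ⟶ Z'), conf i' p') ∧ IsPushout f i i' g

namespace ExactStructure

variable {E : Type u} [Category.{v} E] [Preadditive E]
  [HasZeroObject E] [HasBinaryBiproducts E] (S : ExactStructure E)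

/-- `P` is projective with respect to the exact structure. -/
def Proj (P : E) : Prop :=
  ∀ ⦃B Z : E⦄ (p : B ⟶ Z), (∃ (A : E) (i : A ⟶ B), S.conf i p) →
    ∀ f : P ⟶ Z, ∃ g : P ⟶ B, g ≫ p = f

/-- The exact structure has enough projectives. -/
def Enough : Prop :=
  ∀ M : E, ∃ (P A : E) (i : A ⟶ P) (p : P ⟶ M), S.Proj P ∧ S.conf i p

/-- `pdim M ≤ k` via iterated syzygies. -/
def PdimLe : E → ℕ → Prop
  | M, 0 => S.Proj M
  | M, (k + 1) => ∃ (K P : E) (i : K ⟶ P) (p : P ⟶ M),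
      S.conf i p ∧ S.Proj P ∧ PdimLe K k

/-- Projective dimension in the exact category, valued in ℕ∞. -/
noncomputable def pdim (M : E) : ℕ∞ :=
  sInf {k : ℕ∞ | ∃ m : ℕ, k = (m : ℕ∞) ∧ S.PdimLe M m}

/-- `ExtVanish i M N` expresses `Ext^i_E(M, N) = 0`, by dimension shifting along
conflations with projective middle term. -/
def ExtVanish : ℕ → E → E → Prop
  | 0, M, N => ∀ f : M ⟶ N, f = 0
  | 1, M, N => ∀ ⦃K P : E⦄ (i : K ⟶ P) (p : P ⟶ M), S.conf i p → S.Proj P →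
      ∀ f : K ⟶ N, ∃ g : P ⟶ N, i ≫ g = f
  | (k + 2), M, N => ∀ ⦃K P : E⦄ (i : K ⟶ P) (p : P ⟶ M), S.conf i p → S.Proj P →
      ExtVanish (k + 1) K N

end ExactStructure


namespace ExactStructure

variable {E : Type u} [Category.{v} E] [Preadditive E]
  [HasZeroObject E] [HasBinaryBiproducts E] (S : ExactStructure E)

lemma proj_of_retract {M P : E} (hP : S.Proj P) (s : M ⟶ P) (r : P ⟶ M)
    (hsr : s ≫ r = 𝟙 M) : S.Proj M := by
  intro B Z p hp f
  obtain ⟨g, hg⟩ := hP p hp (r ≫ f)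
  exact ⟨s ≫ g, by rw [Category.assoc, hg, ← Category.assoc, hsr, Category.id_comp]⟩

lemma proj_of_split {K P M : E} {i : K ⟶ P} {p : P ⟶ M} (hc : S.conf i p)
    (hP : S.Proj P) (g : P ⟶ K) (hg : i ≫ g = 𝟙 K) : S.Proj M := by
  obtain ⟨hcolim⟩ := S.isCokernel hc
  have h0 : i ≫ (𝟙 P - g ≫ i) = 0 := by
    rw [Preadditive.comp_sub, Category.comp_id, ← Category.assoc, hg,
      Category.id_comp, sub_self]
  obtain ⟨s, hs⟩ := CokernelCofork.IsColimit.desc' hcolim (𝟙 P - g ≫ i) h0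
  have hsp : s ≫ p = 𝟙 M := by
    apply Cofork.IsColimit.hom_ext hcolim
    simp only [Cofork.π_ofπ] at hs ⊢
    rw [← Category.assoc, hs]
    simp [Preadditive.sub_comp, Category.assoc, S.comp_zero hc]
  exact S.proj_of_retract hP s p hsp

lemma pdimLe_of_extVanish : ∀ (m : ℕ) (M : E), S.PdimLe M (m + 1) →
    (∀ Q : E, S.Proj Q → S.ExtVanish (m + 1) M Q) → S.PdimLe M m
  | 0, M, ⟨K, P, i, p, hc, hP, hK⟩, hv => by
    obtain ⟨g, hg⟩ := hv K hK i p hc hP (𝟙 K)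
    exact S.proj_of_split hc hP g hg
  | (m + 1), M, ⟨K, P, i, p, hc, hP, hK⟩, hv =>
    ⟨K, P, i, p, hc, hP, pdimLe_of_extVanish m K hK (fun Q hQ => hv Q hQ i p hc hP)⟩

lemma proj_of (M : E) (n : ℕ)
    (hext : ∀ P : E, S.Proj P → ∀ i, i ≤ n → S.ExtVanish i M P) :
    ∀ m, m ≤ n → S.PdimLe M m → S.Proj M := by
  intro m
  induction m with
  | zero => exact fun _ h => h
  | succ k ih =>
    intro hk h
    exact ih (Nat.le_of_succ_le hk)
      (S.pdimLe_of_extVanish k M h (fun Q hQ => hext Q hQ (k + 1) hk))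

end ExactStructure

theorem stmt10 {E : Type u} [Category.{v} E] [Preadditive E]
    [HasZeroObject E] [HasBinaryBiproducts E]
    (S : ExactStructure E) (hE : S.Enough) (n : ℕ) (hn : 1 ≤ n) (M : E)
    (hpd : S.PdimLe M (n + 1))
    (hext : ∀ P : E, S.Proj P → ∀ i, i ≤ n → S.ExtVanish i M P) :
    IsZero M ∨ S.pdim M = ((n + 1 : ℕ) : ℕ∞) := by
  by_cases h : ∃ m, m ≤ n ∧ S.PdimLe M m
  · left
    obtain ⟨m, hm, hpm⟩ := h
    have hM : S.Proj M := S.proj_of M n hext m hm hpm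
    have h0 : S.ExtVanish 0 M M := hext M hM 0 (Nat.zero_le n)
    exact (IsZero.iff_id_eq_zero M).mpr (h0 (𝟙 M))
  · right
    refine le_antisymm (sInf_le ⟨n + 1, rfl, hpd⟩) (le_sInf ?_)
    rintro k ⟨m, rfl, hpm⟩
    have hmn : ¬ m ≤ n := fun hmn => h ⟨m, hmn, hpm⟩
    exact_mod_cast Nat.succ_le_of_lt (not_le.mp hmn)
end

section
/- Suppose d_1^X : X_1 → X_0 admits an n-kernel, and for some 1 ≤ m ≤ n there is a sequence X_m → X_{m−1} → ⋯ → X_1 → X_0 with differentials d_m^X, …, d_1^X such that d_i^X is a weak kernel of d_{i−1}^X for 2 ≤ i ≤ m. Then d_m^X admits an (n+1−m)-kernel; i.e., the sequence can be completed to a left n-exact sequence. -/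
open CategoryTheory CategoryTheory.Limits

universe v u

/-- `g : W ⟶ A` is a weak kernel of `f : A ⟶ B`. -/
def IsWeakKernel {C : Type u} [Category.{v} C] [Preadditive C] {W A B : C} (g : W ⟶ A) (f : A ⟶ B) :
    Prop :=
  g ≫ f = 0 ∧ ∀ ⦃T : C⦄ (t : T ⟶ A), t ≫ f = 0 → ∃ u : T ⟶ W, u ≫ g = t

/-- `f : A ⟶ B` admits an n-kernel (`n ≥ 1`). -/
def HasNKernel {C : Type u} [Category.{v} C] [Preadditive C] (n : ℕ) {A B : C}
    (f : A ⟶ B) : Prop :=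
  ∃ (K : ℕ → C) (δ : ∀ i, K (i + 1) ⟶ K i) (e : K 0 ≅ A),
    (∀ c : Cᵒᵖ, Function.Exact ⇑((preadditiveYoneda.map (δ 0 ≫ e.hom)).app c)
      ⇑((preadditiveYoneda.map f).app c)) ∧
    (∀ i, i + 2 ≤ n → ∀ c : Cᵒᵖ, Function.Exact
      ⇑((preadditiveYoneda.map (δ (i + 1))).app c)
      ⇑((preadditiveYoneda.map (δ i)).app c)) ∧
    (∀ c : Cᵒᵖ, Function.Injective ⇑((preadditiveYoneda.map (δ (n - 1))).app c))

/-!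
If `g : P ⟶ A` and `h : W ⟶ A` are both weak kernels of `f`, then `Hom(-, g)` and `Hom(-, h)`
have the same image, and Schanuel's lemma identifies `ker Hom(-, h) ⊕ Hom(-, P)` with
`ker Hom(-, g) ⊕ Hom(-, W)`. Concretely, choose `u ≫ h = g`, `v ≫ g = h`, a weak kernel
`g' : P' ⟶ P` of `g` and `σ ≫ g' = 𝟙 - u ≫ v`; then `[g' ≫ u, 𝟙 - v ≫ u] : P' ⊞ W ⟶ W` is a
weak kernel of `h` whose kernel is carried isomorphically by `(a, b) ↦ (a - b ≫ σ, b ≫ u)` from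
that of `biprod.fst ≫ g' : P' ⊞ P ⟶ P`. So the left exact tail of `f` beyond `g'` transfers to
`h`, one step down the chain. At the last step `g'` is a monomorphism, the kernel of
`Hom(-, h)` is a direct summand of `Hom(-, P' ⊞ W)`, and idempotent completeness makes it
representable.
-/

section

variable {C : Type u} [Category.{v} C] [Preadditive C]

theorem isWeakKernel_iff_forall_preadditiveYoneda_exact {W A B : C} (g : W ⟶ A) (f : A ⟶ B) :
    IsWeakKernel g f ↔ ∀ c : Cᵒᵖ, Function.Exact ⇑((preadditiveYoneda.map g).app c)
      ⇑((preadditiveYoneda.map f).app c) := by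
  refine ⟨fun ⟨hgf, hfac⟩ c t => ⟨fun ht => hfac t ht, ?_⟩,
    fun H => ⟨(H (Opposite.op W) g).2 ⟨𝟙 W, Category.id_comp g⟩,
      fun T t ht => (H (Opposite.op T) t).1 ht⟩⟩
  rintro ⟨s, rfl⟩
  exact (Category.assoc _ g f).trans ((congrArg _ hgf).trans comp_zero)

theorem mono_iff_forall_preadditiveYoneda_injective {A B : C} (g : A ⟶ B) :
    Mono g ↔ ∀ c : Cᵒᵖ, Function.Injective ⇑((preadditiveYoneda.map g).app c) := by
  simp only [Preadditive.mono_iff_cancel_zero, injective_iff_map_eq_zero]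
  exact ⟨fun H c t => H _ t, fun H T t => H (Opposite.op T) t⟩

theorem IsWeakKernel.of_comp_eq_zero_iff {W A B B' : C} {g : W ⟶ A} {f : A ⟶ B} {f' : A ⟶ B'}
    (hg : IsWeakKernel g f) (hf : ∀ ⦃T : C⦄ (t : T ⟶ A), t ≫ f' = 0 ↔ t ≫ f = 0) :
    IsWeakKernel g f' :=
  ⟨(hf g).2 hg.1, fun _ t ht => hg.2 t ((hf t).1 ht)⟩

theorem IsWeakKernel.comp_mono {W A B B' : C} {g : W ⟶ A} {f : A ⟶ B} (hg : IsWeakKernel g f)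
    (ι : B ⟶ B') [Mono ι] : IsWeakKernel g (f ≫ ι) :=
  hg.of_comp_eq_zero_iff fun _ t => by
    rw [← Category.assoc]
    exact ⟨zero_of_comp_mono ι, fun h => by rw [h, zero_comp]⟩

theorem hasNKernel_one_iff {A B : C} (f : A ⟶ B) :
    HasNKernel 1 f ↔ ∃ (P : C) (g : P ⟶ A), IsWeakKernel g f ∧ Mono g := by
  simp only [HasNKernel, ← isWeakKernel_iff_forall_preadditiveYoneda_exact,
    ← mono_iff_forall_preadditiveYoneda_injective]
  constructor
  · rintro ⟨K, δ, e, hf, -, (hδ : Mono (δ 0))⟩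
    exact ⟨K 1, δ 0 ≫ e.hom, hf, mono_comp _ _⟩
  · rintro ⟨P, g, hg, hmono⟩
    exact ⟨fun | 0 => A | _ + 1 => P, fun | 0 => g | _ + 1 => 𝟙 P, Iso.refl A,
      by simpa using hg, fun i hi => absurd hi (by omega), by simpa using hmono⟩

theorem hasNKernel_add_two_iff (n : ℕ) {A B : C} (f : A ⟶ B) :
    HasNKernel (n + 2) f ↔ ∃ (P : C) (g : P ⟶ A), IsWeakKernel g f ∧ HasNKernel (n + 1) g := by
  simp only [HasNKernel, ← isWeakKernel_iff_forall_preadditiveYoneda_exact,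
    ← mono_iff_forall_preadditiveYoneda_injective]
  constructor
  · rintro ⟨K, δ, e, hf, hδ, hmono⟩
    refine ⟨K 1, δ 0 ≫ e.hom, hf, fun j => K (j + 1), fun j => δ (j + 1), Iso.refl _, ?_,
      fun i hi => hδ (i + 1) (by omega), by simpa using hmono⟩
    simpa using (hδ 0 (by omega)).comp_mono e.hom
  · rintro ⟨P, g, hg, K, δ, e, hg', hδ, hmono⟩
    refine ⟨fun | 0 => A | 1 => P | j + 2 => K (j + 1),
      fun | 0 => g | 1 => δ 0 ≫ e.hom | j + 2 => δ (j + 1), Iso.refl A, by simpa using hg, ?_, ?_⟩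
    · rintro (_ | _ | i) hi
      · exact hg'
      · exact (hδ 0 (by omega)).comp_mono e.hom
      · exact hδ (i + 1) (by omega)
    · rcases n with _ | n
      · have : Mono (δ 0) := hmono
        simpa using mono_comp (δ 0) e.hom
      · simpa using hmono

theorem HasNKernel.of_comp_eq_zero_iff {A B B' : C} {f : A ⟶ B} {f' : A ⟶ B'} {n : ℕ}
    (h : HasNKernel n f) (hf : ∀ ⦃T : C⦄ (t : T ⟶ A), t ≫ f' = 0 ↔ t ≫ f = 0) :
    HasNKernel n f' := by
  obtain ⟨K, δ, e, hδ, hrest⟩ := h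
  rw [← isWeakKernel_iff_forall_preadditiveYoneda_exact] at hδ
  exact ⟨K, δ, e, (isWeakKernel_iff_forall_preadditiveYoneda_exact _ _).1
    (hδ.of_comp_eq_zero_iff hf), hrest⟩

-- `hker` and `hinj` say that `φ` maps the kernel of `Hom(-, g)` isomorphically onto that of
-- `Hom(-, w)`.
theorem HasNKernel.of_kernel_iso {X Y X' Y' : C} {g : X ⟶ Y} {w : X' ⟶ Y'} (φ : X ⟶ X')
    (hker : ∀ ⦃T : C⦄ (t : T ⟶ X'), t ≫ w = 0 ↔ ∃ a : T ⟶ X, a ≫ g = 0 ∧ a ≫ φ = t)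
    (hinj : ∀ ⦃T : C⦄ (a : T ⟶ X), a ≫ g = 0 → a ≫ φ = 0 → a = 0) {n : ℕ}
    (h : HasNKernel (n + 1) g) : HasNKernel (n + 1) w := by
  have hwk : ∀ {K : C} {k : K ⟶ X}, IsWeakKernel k g → IsWeakKernel (k ≫ φ) w := fun hk =>
    ⟨(hker _).2 ⟨_, hk.1, rfl⟩, fun T t ht => by
      obtain ⟨a, ha, rfl⟩ := (hker t).1 ht
      obtain ⟨s, rfl⟩ := hk.2 a ha
      exact ⟨s, (Category.assoc _ _ _).symm⟩⟩
  have hcomp : ∀ {K : C} {k : K ⟶ X}, IsWeakKernel k g →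
      ∀ ⦃T : C⦄ (t : T ⟶ K), t ≫ k ≫ φ = 0 ↔ t ≫ k = 0 := fun hk T t =>
    ⟨fun h => hinj _ (by rw [Category.assoc, hk.1, comp_zero]) (by rwa [Category.assoc]),
      fun h => by rw [← Category.assoc, h, zero_comp]⟩
  rcases n with _ | n
  · obtain ⟨K, k, hk, hmono⟩ := (hasNKernel_one_iff g).1 h
    refine (hasNKernel_one_iff w).2 ⟨K, k ≫ φ, hwk hk, ?_⟩
    exact Preadditive.mono_of_cancel_zero _ fun t ht => zero_of_comp_mono k ((hcomp hk t).1 ht)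
  · obtain ⟨K, k, hk, hK⟩ := (hasNKernel_add_two_iff n g).1 h
    refine (hasNKernel_add_two_iff n w).2 ⟨K, k ≫ φ, hwk hk, ?_⟩
    exact hK.of_comp_eq_zero_iff (hcomp hk)

section Biproducts

variable [HasBinaryBiproducts C]

theorem IsWeakKernel.biprod_map {K P Q A : C} {k : K ⟶ P} {g : P ⟶ A} (hk : IsWeakKernel k g) :
    IsWeakKernel (biprod.map k (𝟙 Q)) (biprod.fst ≫ g) := by
  refine ⟨by rw [biprod.map_fst_assoc, hk.1, comp_zero], fun T t ht => ?_⟩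
  obtain ⟨s, hs⟩ := hk.2 (t ≫ biprod.fst) (by rwa [Category.assoc])
  exact ⟨biprod.lift s (t ≫ biprod.snd), by ext <;> simp [hs]⟩

theorem HasNKernel.biprod_fst_comp {P Q A : C} {g : P ⟶ A} {n : ℕ} (h : HasNKernel (n + 1) g) :
    HasNKernel (n + 1) (biprod.fst ≫ g : P ⊞ Q ⟶ A) := by
  rcases n with _ | n
  · obtain ⟨K, k, hk, hmono⟩ := (hasNKernel_one_iff g).1 h
    exact (hasNKernel_one_iff _).2 ⟨_, _, hk.biprod_map, inferInstance⟩
  · obtain ⟨K, k, hk, hK⟩ := (hasNKernel_add_two_iff n g).1 h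
    refine (hasNKernel_add_two_iff n _).2 ⟨_, _, hk.biprod_map, hK.of_kernel_iso biprod.inl
      (fun T t => ⟨fun ht => ⟨t ≫ biprod.fst, ?_, ?_⟩, ?_⟩)
      (fun T a _ ha => zero_of_comp_mono _ ha)⟩
    · simpa using congrArg (· ≫ biprod.fst) ht
    · have : t ≫ biprod.snd = 0 := by simpa using congrArg (· ≫ biprod.snd) ht
      ext <;> simp [this]
    · rintro ⟨a, ha, rfl⟩
      simp [reassoc_of% ha]

end Biproducts

-- The complement of the split summand `r` of `L` is mapped by `w` isomorphically onto the
-- kernel of `Hom(-, h)`.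
theorem IsWeakKernel.exists_mono_of_isSplitMono [IsIdempotentComplete C] {P L W A : C}
    {r : P ⟶ L} {w : L ⟶ W} {h : W ⟶ A} (hw : IsWeakKernel w h) (hr : IsWeakKernel r w)
    [IsSplitMono r] : ∃ (V : C) (j : V ⟶ W), IsWeakKernel j h ∧ Mono j := by
  obtain ⟨V, i, q, hiq, hqi⟩ := IsIdempotentComplete.idempotents_split L
    (𝟙 L - retraction r ≫ r) (by simp [Preadditive.sub_comp, Preadditive.comp_sub])
  have hrq : r ≫ q = 0 := by
    rw [← Category.comp_id (r ≫ q), ← hiq, Category.assoc, reassoc_of% hqi]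
    simp [Preadditive.comp_sub]
  refine ⟨V, i ≫ w, ⟨by rw [Category.assoc, hw.1, comp_zero], fun T t ht => ?_⟩,
    Preadditive.mono_of_cancel_zero _ fun t ht => ?_⟩
  · obtain ⟨s, rfl⟩ := hw.2 t ht
    exact ⟨s ≫ q, by simp [reassoc_of% hqi, Preadditive.sub_comp, hr.1]⟩
  · obtain ⟨s, hs⟩ := hr.2 (t ≫ i) (by rwa [Category.assoc])
    rw [← Category.comp_id t, ← hiq, ← Category.assoc, ← hs, Category.assoc, hrq, comp_zero]

section Schanuel

variable [HasBinaryBiproducts C] {A P P' W : C} {g : P ⟶ A} {h : W ⟶ A} {g' : P' ⟶ P}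
  {u : P ⟶ W} {v : W ⟶ P} {σ : P ⟶ P'}

theorem isWeakKernel_biprod_desc (hu : u ≫ h = g) (hv : v ≫ g = h) (hg' : IsWeakKernel g' g) :
    IsWeakKernel (biprod.desc (g' ≫ u) (𝟙 W - v ≫ u)) h := by
  refine ⟨?_, fun T t ht => ?_⟩
  · ext
    · simp [hu, hg'.1]
    · simp [Preadditive.sub_comp, hu, hv]
  · obtain ⟨s, hs⟩ := hg'.2 (t ≫ v) (by rw [Category.assoc, hv, ht])
    refine ⟨biprod.lift s t, ?_⟩
    rw [biprod.lift_desc, reassoc_of% hs, Preadditive.comp_sub, Category.comp_id]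
    abel

theorem biprod_desc_inl_lift_comp_desc (hσ : σ ≫ g' = 𝟙 P - u ≫ v) :
    biprod.desc biprod.inl (biprod.lift (-σ) u) ≫ biprod.desc (g' ≫ u) (𝟙 W - v ≫ u) =
      biprod.fst ≫ g' ≫ u := by
  ext
  · simp
  · simp [reassoc_of% hσ, Preadditive.sub_comp, Preadditive.comp_sub]

theorem comp_biprod_desc_eq_zero_iff (hσ : σ ≫ g' = 𝟙 P - u ≫ v) ⦃T : C⦄ (t : T ⟶ P' ⊞ W) :
    t ≫ biprod.desc (g' ≫ u) (𝟙 W - v ≫ u) = 0 ↔ ∃ s : T ⟶ P' ⊞ P,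
      s ≫ biprod.fst ≫ g' = 0 ∧ s ≫ biprod.desc biprod.inl (biprod.lift (-σ) u) = t := by
  refine ⟨fun ht => ?_, ?_⟩
  · simp only [biprod.desc_eq, Preadditive.comp_sub, Category.comp_id, Preadditive.comp_add] at ht
    set b := t ≫ biprod.snd ≫ v - t ≫ biprod.fst ≫ g'
    have hb : b ≫ u = t ≫ biprod.snd := by
      simp only [b, Preadditive.sub_comp, Category.assoc]
      linear_combination (norm := abel_nf) -ht
    refine ⟨biprod.lift (t ≫ biprod.fst + b ≫ σ) b, ?_, ?_⟩
    · rw [biprod.lift_fst_assoc, Preadditive.add_comp, Category.assoc b, hσ, Preadditive.comp_sub,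
        Category.comp_id, ← Category.assoc b, hb]
      simp only [b, Category.assoc]
      abel
    · ext <;> simp [biprod.lift_desc, hb]
  · rintro ⟨s, hs, rfl⟩
    rw [Category.assoc, biprod_desc_inl_lift_comp_desc hσ, reassoc_of% hs, zero_comp]

theorem eq_zero_of_comp_biprod_desc (hσ : σ ≫ g' = 𝟙 P - u ≫ v) ⦃T : C⦄ (s : T ⟶ P' ⊞ P)
    (hs : s ≫ biprod.fst ≫ g' = 0) (hs' : s ≫ biprod.desc biprod.inl (biprod.lift (-σ) u) = 0) :
    s = 0 := by
  have hfst := congrArg (· ≫ biprod.fst) hs'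
  have hsnd := congrArg (· ≫ biprod.snd) hs'
  simp only [biprod.desc_eq, Preadditive.comp_add, Preadditive.add_comp, Category.assoc,
    BinaryBicone.inl_fst, Category.comp_id, biprod.lift_fst, Preadditive.comp_neg, zero_comp,
    BinaryBicone.inl_snd, comp_zero, biprod.lift_snd, zero_add] at hfst hsnd
  rw [add_neg_eq_zero] at hfst
  have hb : s ≫ biprod.snd = 0 := by
    calc s ≫ biprod.snd = s ≫ biprod.snd ≫ (σ ≫ g' + u ≫ v) := by
          rw [hσ, sub_add_cancel, Category.comp_id]
      _ = 0 := by
          rw [Preadditive.comp_add, Preadditive.comp_add, ← reassoc_of% hfst, reassoc_of% hsnd, hs,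
            zero_comp, add_zero]
  ext <;> simp [hfst, hb, reassoc_of% hb]

theorem isSplitMono_biprod_lift (hσ : σ ≫ g' = 𝟙 P - u ≫ v) :
    IsSplitMono (biprod.lift (-σ) u) :=
  IsSplitMono.mk' ⟨biprod.desc (-g') v, by simp [hσ]⟩

theorem isWeakKernel_biprod_lift [Mono g'] (hσ : σ ≫ g' = 𝟙 P - u ≫ v) :
    IsWeakKernel (biprod.lift (-σ) u) (biprod.desc (g' ≫ u) (𝟙 W - v ≫ u)) := by
  refine ⟨by simpa using biprod.inr ≫= biprod_desc_inl_lift_comp_desc hσ, fun T t ht => ?_⟩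
  obtain ⟨s, hs, rfl⟩ := (comp_biprod_desc_eq_zero_iff hσ t).1 ht
  have : s ≫ biprod.fst = 0 := zero_of_comp_mono g' (by rwa [Category.assoc])
  exact ⟨s ≫ biprod.snd, by ext <;> simp [biprod.desc_eq, this]⟩

end Schanuel

theorem HasNKernel.of_isWeakKernel [HasBinaryBiproducts C] [IsIdempotentComplete C] {A B W : C}
    {f : A ⟶ B} {h : W ⟶ A} {N : ℕ} (hf : HasNKernel (N + 2) f) (hh : IsWeakKernel h f) :
    HasNKernel (N + 1) h := by
  obtain ⟨P, g, hg, hgN⟩ := (hasNKernel_add_two_iff N f).1 hf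
  obtain ⟨u, hu⟩ := hh.2 g hg.1
  obtain ⟨v, hv⟩ := hg.2 h hh.1
  have exists_σ : ∀ {P' : C} {g' : P' ⟶ P}, IsWeakKernel g' g →
      ∃ σ : P ⟶ P', σ ≫ g' = 𝟙 P - u ≫ v := fun hg' =>
    hg'.2 _ (by rw [Preadditive.sub_comp, Category.id_comp, Category.assoc, hv, hu, sub_self])
  rcases N with _ | N
  · obtain ⟨P', g', hg', _⟩ := (hasNKernel_one_iff g).1 hgN
    obtain ⟨σ, hσ⟩ := exists_σ hg'
    have := isSplitMono_biprod_lift hσ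
    exact (hasNKernel_one_iff h).2 ((isWeakKernel_biprod_desc hu hv hg').exists_mono_of_isSplitMono
      (isWeakKernel_biprod_lift hσ))
  · obtain ⟨P', g', hg', hg'N⟩ := (hasNKernel_add_two_iff N g).1 hgN
    obtain ⟨σ, hσ⟩ := exists_σ hg'
    exact (hasNKernel_add_two_iff N h).2 ⟨_, _, isWeakKernel_biprod_desc hu hv hg',
      hg'N.biprod_fst_comp.of_kernel_iso _ (comp_biprod_desc_eq_zero_iff hσ)
        (eq_zero_of_comp_biprod_desc hσ)⟩

end

theorem stmt11_general {C : Type u} [Category.{v} C] [Preadditive C]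
    [HasBinaryBiproducts C] [IsIdempotentComplete C]
    (n m : ℕ) (hm1 : 1 ≤ m) (hmn : m ≤ n) (X : ℕ → C) (d : ∀ i, X (i + 1) ⟶ X i)
    (hker : HasNKernel n (d 0))
    (hweak : ∀ j, j + 2 ≤ m → IsWeakKernel (d (j + 1)) (d j)) :
    HasNKernel (n + 1 - m) (d (m - 1)) := by
  have hkernel : ∀ j, j + 1 ≤ m → HasNKernel (n - j) (d j) := by
    intro j
    induction j with
    | zero => exact fun _ => hker
    | succ j ih =>
      intro hj
      obtain ⟨N, hN⟩ : ∃ N, n - j = N + 2 := ⟨n - j - 2, by omega⟩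
      rw [show n - (j + 1) = N + 1 by omega]
      exact (hN ▸ ih (by omega)).of_isWeakKernel (hweak j (by omega))
  rw [show n + 1 - m = n - (m - 1) by omega]
  exact hkernel (m - 1) (by omega)

theorem stmt11 {C : Type u} [Category.{v} C] [Preadditive C]
    [HasZeroObject C] [HasBinaryBiproducts C] [IsIdempotentComplete C]
    (n m : ℕ) (hm1 : 1 ≤ m) (hmn : m ≤ n) (X : ℕ → C) (d : ∀ i, X (i + 1) ⟶ X i)
    (hker : HasNKernel n (d 0))
    (hweak : ∀ j, j + 2 ≤ m → IsWeakKernel (d (j + 1)) (d j)) :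
    HasNKernel (n + 1 - m) (d (m - 1)) :=
  stmt11_general n m hm1 hmn X d hker hweak
end

section
/- Let F ⊂ ex_n C be closed under isomorphism and extensions in mod C. Then Pb(F) is also closed under extensions in mod C, where Pb(F) is the subcategory of all F ∈ F such that for every morphism α : G → F of C-modules with G ∈ mod C, both Im α and F/Im α lie in F. -/
open CategoryTheory CategoryTheory.Limits

universe v u

set_option synthInstance.maxHeartbeats 400000
set_option maxHeartbeats 800000

/-!
STATEMENT 15: if 𝓕 ⊆ ex_n C is closed under isomorphism and under extensions in
mod C, then Pb(𝓕) is also closed under extensions in mod C.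
-/

/-- `F` belongs to `mod C`: it admits a pointwise exact resolution by representable
functors. -/
def FinitelyResolved {C : Type u} [Category.{v} C] [Preadditive C]
    (F : Cᵒᵖ ⥤ AddCommGrpCat.{v}) : Prop :=
  ∃ (X : ℕ → C)
    (d : ∀ i, preadditiveYoneda.obj (X (i + 1)) ⟶ preadditiveYoneda.obj (X i))
    (ε : preadditiveYoneda.obj (X 0) ⟶ F),
    (∀ c : Cᵒᵖ, Function.Surjective ⇑(ε.app c)) ∧
    (∀ c : Cᵒᵖ, Function.Exact ⇑((d 0).app c) ⇑(ε.app c)) ∧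
    (∀ i (c : Cᵒᵖ), Function.Exact ⇑((d (i + 1)).app c) ⇑((d i).app c))

/-- `F` admits a projective resolution in `mod C` of length at most `m`
(its `m`-th differential vanishing). -/
def HasResLen {C : Type u} [Category.{v} C] [Preadditive C]
    (F : Cᵒᵖ ⥤ AddCommGrpCat.{v}) (m : ℕ) : Prop :=
  ∃ (X : ℕ → C)
    (d : ∀ i, preadditiveYoneda.obj (X (i + 1)) ⟶ preadditiveYoneda.obj (X i))
    (ε : preadditiveYoneda.obj (X 0) ⟶ F),
    (∀ c : Cᵒᵖ, Function.Surjective ⇑(ε.app c)) ∧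
    (∀ c : Cᵒᵖ, Function.Exact ⇑((d 0).app c) ⇑(ε.app c)) ∧
    (∀ i (c : Cᵒᵖ), Function.Exact ⇑((d (i + 1)).app c) ⇑((d i).app c)) ∧
    d m = 0

/-- `F ∈ ex_n C`: `F ∈ mod C`, `pdim F ≤ n+1`, and `Ext^i(F, Hom_C(−,Y)) = 0` for
`0 ≤ i ≤ n` and all `Y ∈ C`. -/
def MemExN {C : Type u} [Category.{v} C] [Preadditive C] (n : ℕ)
    (F : Cᵒᵖ ⥤ AddCommGrpCat.{v}) : Prop :=
  FinitelyResolved F ∧ HasResLen F (n + 1) ∧ ∀ (Y : C) i, i ≤ n → ExtVanish F Y i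

/-- The operator `Pb` on classes of C-modules: `F ∈ Pb(𝓕)` iff `F ∈ 𝓕` and for
every `α : G ⟶ F` with `G ∈ mod C` both `Im α` and `F/Im α = Cok α` lie in `𝓕`. -/
noncomputable def PbOp {C : Type u} [Category.{v} C] [Preadditive C]
    (𝓕 : Set (Cᵒᵖ ⥤ AddCommGrpCat.{v})) : Set (Cᵒᵖ ⥤ AddCommGrpCat.{v}) :=
  {F | F ∈ 𝓕 ∧ ∀ (G : Cᵒᵖ ⥤ AddCommGrpCat.{v}) (α : G ⟶ F), FinitelyResolved G →
    Limits.image α ∈ 𝓕 ∧ cokernel α ∈ 𝓕}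

/-- `𝓕` is closed under extensions (for pointwise exact sequences of C-modules). -/
def ExtClosed {C : Type u} [Category.{v} C] [Preadditive C]
    (𝓕 : Set (Cᵒᵖ ⥤ AddCommGrpCat.{v})) : Prop :=
  ∀ ⦃F G H : Cᵒᵖ ⥤ AddCommGrpCat.{v}⦄ (α : F ⟶ G) (β : G ⟶ H),
    (∀ c : Cᵒᵖ, Function.Injective ⇑(α.app c)) →
    (∀ c : Cᵒᵖ, Function.Exact ⇑(α.app c) ⇑(β.app c)) →
    (∀ c : Cᵒᵖ, Function.Surjective ⇑(β.app c)) →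
    F ∈ 𝓕 → H ∈ 𝓕 → G ∈ 𝓕

/-- `𝓕` is closed under isomorphism. -/
def IsoClosedSet {C : Type u} [Category.{v} C] [Preadditive C]
    (𝓕 : Set (Cᵒᵖ ⥤ AddCommGrpCat.{v})) : Prop :=
  ∀ F G : Cᵒᵖ ⥤ AddCommGrpCat.{v}, F ∈ 𝓕 → Nonempty (F ≅ G) → G ∈ 𝓕


open CategoryTheory CategoryTheory.Limits Opposite

/-!
Let `0 → F → G → H → 0` be exact with `F, H ∈ Pb(𝓕)`, let `α : A ⟶ G` with `A ∈ mod C`, put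
`β = α ≫ π`, and let `κ : ker β ⟶ F` be the map induced by `α`. A diagram chase shows that
`0 → Im κ → Im α → Im β → 0` and `0 → Cok κ → Cok α → Cok β → 0` are exact, so `Im α` and `Cok α`
lie in `𝓕` as soon as `ker β ∈ mod C`, i.e. as soon as `Pb(𝓕)` may be applied to `κ`.

Now `ker β` is the kernel of the epimorphism `e : A ⟶ Im β` between modules of `mod C`. Lift `e`
to a chain map `f` between representable resolutions `P → A` and `Q → Im β`. Since `e` is onto,
`(f₀, d) : P₀ ⊞ Q₁ ⟶ Q₀` is a split epimorphism, so it has a kernel `R` in the idempotent complete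
category `C`, and `R ← P₁ ⊞ Q₂ ← P₂ ⊞ Q₃ ← ⋯` (the mapping cone of `f`) resolves `ker β`.
-/

section Pointwise

variable {J : Type*} [Category J] {F G H : J ⥤ AddCommGrpCat.{v}}

lemma injective_app_of_mono (f : F ⟶ G) [Mono f] (j : J) : Function.Injective (f.app j) :=
  (AddCommGrpCat.mono_iff_injective _).1 ((NatTrans.mono_iff_mono_app f).1 inferInstance j)

lemma surjective_app_of_epi (f : F ⟶ G) [Epi f] (j : J) : Function.Surjective (f.app j) :=
  (AddCommGrpCat.epi_iff_surjective _).1 ((NatTrans.epi_iff_epi_app f).1 inferInstance j)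

lemma exact_app_of_exact {f : F ⟶ G} {g : G ⟶ H} {w : f ≫ g = 0}
    (hS : (ShortComplex.mk f g w).Exact) (j : J) : Function.Exact (f.app j) (g.app j) :=
  (ShortComplex.ab_exact_iff_function_exact _).1 (hS.map ((evaluation J _).obj j))

lemma exact_app_kernel_ι (g : G ⟶ H) (j : J) : Function.Exact ((kernel.ι g).app j) (g.app j) :=
  exact_app_of_exact (w := kernel.condition g)
    (ShortComplex.exact_of_f_is_kernel (ShortComplex.mk _ _ _) (kernelIsKernel g)) j

lemma exact_app_cokernel_π (f : F ⟶ G) (j : J) :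
    Function.Exact (f.app j) ((cokernel.π f).app j) :=
  exact_app_of_exact (w := cokernel.condition f)
    (ShortComplex.exact_of_g_is_cokernel (ShortComplex.mk _ _ _) (cokernelIsCokernel f)) j

lemma app_app_apply_of_comp_eq_comp {K : J ⥤ AddCommGrpCat.{v}} {f : F ⟶ G} {g : G ⟶ K}
    {f' : F ⟶ H} {g' : H ⟶ K} (w : f ≫ g = f' ≫ g') (j : J) (x : F.obj j) :
    g.app j (f.app j x) = g'.app j (f'.app j x) := by
  simpa using congr_arg (fun φ : F ⟶ K => φ.app j x) w

lemma app_app_apply_of_comp_eq {f : F ⟶ G} {g : G ⟶ H} {h : F ⟶ H} (w : f ≫ g = h) (j : J)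
    (x : F.obj j) : g.app j (f.app j x) = h.app j x := by
  rw [← w]
  rfl

lemma exists_lift_of_range_subset {T : J ⥤ AddCommGrpCat.{v}} (f : F ⟶ G)
    (hf : ∀ j, Function.Injective (f.app j)) (t : T ⟶ G)
    (ht : ∀ j x, t.app j x ∈ Set.range (f.app j)) : ∃ t' : T ⟶ F, t' ≫ f = t := by
  choose s hs using ht
  have hadd : ∀ j x y, s j (x + y) = s j x + s j y := fun j x y => hf j (by simp only [map_add, hs])
  refine ⟨⟨fun j => AddCommGrpCat.ofHom (AddMonoidHom.mk' (s j) (hadd j)), fun j j' φ => ?_⟩, ?_⟩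
  · ext x
    apply hf j'
    change f.app j' (s j' (T.map φ x)) = f.app j' (F.map φ (s j x))
    rw [hs, NatTrans.naturality_apply, NatTrans.naturality_apply, hs]
  · ext j x
    exact hs j x

lemma exists_lift_of_exact_app (f : F ⟶ G) (g : G ⟶ H) (hf : ∀ j, Function.Injective (f.app j))
    (hfg : ∀ j, Function.Exact (f.app j) (g.app j)) {T : J ⥤ AddCommGrpCat.{v}} (t : T ⟶ G)
    (ht : t ≫ g = 0) : ∃ t' : T ⟶ F, t' ≫ f = t :=
  exists_lift_of_range_subset f hf t fun j x =>
    (hfg j _).1 (by simpa using congr_arg (fun φ : T ⟶ H => φ.app j x) ht)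

end Pointwise

section DiagramChase

variable {K A F G H : Type*} [AddCommGroup K] [AddCommGroup A] [AddCommGroup F] [AddCommGroup G]
  [AddCommGroup H] {ι : F →+ G} {π : G →+ H} {α : A →+ G} {β : A →+ H} {k : K →+ A} {κ : K →+ F}

theorem image_sequence_shortExact {Iκ Iα Iβ : Type*} [AddCommGroup Iκ] [AddCommGroup Iα]
    [AddCommGroup Iβ] {eκ : K →+ Iκ} {mκ : Iκ →+ F} {eα : A →+ Iα} {mα : Iα →+ G}
    {eβ : A →+ Iβ} {mβ : Iβ →+ H} {u : Iκ →+ Iα} {v : Iα →+ Iβ}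
    (hι : Function.Injective ι) (hιπ : Function.Exact ι π) (hβ : ∀ a, β a = π (α a))
    (hkβ : Function.Exact k β) (hκ : ∀ t, ι (κ t) = α (k t))
    (hmκ : Function.Injective mκ) (hκfac : ∀ t, mκ (eκ t) = κ t)
    (heα : Function.Surjective eα) (hmα : Function.Injective mα) (hαfac : ∀ a, mα (eα a) = α a)
    (heβ : Function.Surjective eβ) (hmβ : Function.Injective mβ) (hβfac : ∀ a, mβ (eβ a) = β a)
    (hu : ∀ y, mα (u y) = ι (mκ y)) (hv : ∀ z, mβ (v z) = π (mα z)) :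
    Function.Injective u ∧ Function.Exact u v ∧ Function.Surjective v := by
  refine ⟨fun y y' h => hmκ (hι ?_), fun z => ⟨fun hz => ?_, ?_⟩, fun w => ?_⟩
  · rw [← hu, ← hu, h]
  · obtain ⟨a, rfl⟩ := heα z
    obtain ⟨t, rfl⟩ := (hkβ a).1 (by rw [hβ, ← hαfac, ← hv, hz, map_zero])
    exact ⟨eκ t, hmα (by rw [hu, hκfac, hκ, hαfac])⟩
  · rintro ⟨y, rfl⟩
    apply hmβ
    rw [hv, hu, hιπ.apply_apply_eq_zero, map_zero]
  · obtain ⟨a, rfl⟩ := heβ w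
    exact ⟨eα a, hmβ (by rw [hv, hαfac, hβfac, hβ])⟩

theorem cokernel_sequence_shortExact {Qκ Qα Qβ : Type*} [AddCommGroup Qκ] [AddCommGroup Qα]
    [AddCommGroup Qβ] {pκ : F →+ Qκ} {pα : G →+ Qα} {pβ : H →+ Qβ} {u : Qκ →+ Qα} {v : Qα →+ Qβ}
    (hι : Function.Injective ι) (hιπ : Function.Exact ι π) (hπ : Function.Surjective π)
    (hβ : ∀ a, β a = π (α a)) (hkβ : Function.Exact k β) (hκ : ∀ t, ι (κ t) = α (k t))
    (hpκ : Function.Surjective pκ) (hκpκ : Function.Exact κ pκ)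
    (hpα : Function.Surjective pα) (hαpα : Function.Exact α pα)
    (hpβ : Function.Surjective pβ) (hβpβ : Function.Exact β pβ)
    (hu : ∀ y, u (pκ y) = pα (ι y)) (hv : ∀ g, v (pα g) = pβ (π g)) :
    Function.Injective u ∧ Function.Exact u v ∧ Function.Surjective v := by
  refine ⟨(injective_iff_map_eq_zero u).2 fun x hx => ?_, fun x => ⟨fun hx => ?_, ?_⟩,
    fun x => ?_⟩
  · obtain ⟨y, rfl⟩ := hpκ x
    obtain ⟨a, ha⟩ := (hαpα _).1 (by rwa [← hu])
    obtain ⟨t, rfl⟩ := (hkβ a).1 (by rw [hβ, ha, hιπ.apply_apply_eq_zero])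
    rw [← hι (by rw [hκ, ha] : ι (κ t) = ι y), hκpκ.apply_apply_eq_zero]
  · obtain ⟨g, rfl⟩ := hpα x
    obtain ⟨a, ha⟩ := (hβpβ _).1 (by rwa [← hv])
    obtain ⟨y, hy⟩ := (hιπ (g - α a)).1 (by rw [map_sub, ← hβ, ha, sub_self])
    exact ⟨pκ y, by rw [hu, hy, map_sub, hαpα.apply_apply_eq_zero, sub_zero]⟩
  · rintro ⟨w, rfl⟩
    obtain ⟨y, rfl⟩ := hpκ w
    rw [hu, hv, hιπ.apply_apply_eq_zero, map_zero]
  · obtain ⟨h, rfl⟩ := hpβ x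
    obtain ⟨g, rfl⟩ := hπ h
    exact ⟨pα g, hv g⟩

end DiagramChase

section Representable

variable {C : Type u} [Category.{v} C] [Preadditive C]

/-- `FinitelyResolved` with the differentials taken in `C` (`preadditiveYoneda` is fully faithful)
and pointwise exactness spelled out: `d (i + 1)` is a weak kernel of `d i`, and `d 0` one of `ε`. -/
structure RepResolution (F : Cᵒᵖ ⥤ AddCommGrpCat.{v}) where
  X : ℕ → C
  d : ∀ i, X (i + 1) ⟶ X i
  ε : preadditiveYoneda.obj (X 0) ⟶ F
  surjective_ε (W : C) : Function.Surjective (ε.app (op W))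
  ε_app_comp_d {W : C} (u : W ⟶ X 1) : ε.app (op W) (u ≫ d 0) = 0
  exists_comp_d_zero {W : C} (w : W ⟶ X 0) : ε.app (op W) w = 0 → ∃ u, u ≫ d 0 = w
  d_comp_d (i : ℕ) : d (i + 1) ≫ d i = 0
  exists_comp_d_succ {W : C} (i : ℕ) (w : W ⟶ X (i + 1)) : w ≫ d i = 0 → ∃ u, u ≫ d (i + 1) = w

theorem finitelyResolved_iff_nonempty_repResolution {F : Cᵒᵖ ⥤ AddCommGrpCat.{v}} :
    FinitelyResolved F ↔ Nonempty (RepResolution F) := by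
  constructor
  · rintro ⟨X, d, ε, hε, h0, hS⟩
    obtain ⟨p, rfl⟩ : ∃ p : ∀ i, X (i + 1) ⟶ X i, (fun i => preadditiveYoneda.map (p i)) = d :=
      ⟨fun i => preadditiveYoneda.preimage (d i), funext fun i => preadditiveYoneda.map_preimage _⟩
    refine ⟨⟨X, p, ε, fun W => hε (op W), fun u => (h0 _).apply_apply_eq_zero u,
      fun w hw => (h0 _ w).1 hw, fun i => ?_, fun i w hw => (hS i _ w).1 hw⟩⟩
    have h := (hS i (op (X (i + 2)))).apply_apply_eq_zero (𝟙 (X (i + 2)))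
    change (𝟙 _ ≫ p (i + 1)) ≫ p i = 0 at h
    rwa [Category.id_comp] at h
  · rintro ⟨R⟩
    refine ⟨R.X, fun i => preadditiveYoneda.map (R.d i), R.ε, fun c => R.surjective_ε c.unop,
      fun c w => ⟨R.exists_comp_d_zero w, ?_⟩, fun i c w => ⟨R.exists_comp_d_succ i w, ?_⟩⟩
    · rintro ⟨u, rfl⟩
      exact R.ε_app_comp_d u
    · rintro ⟨u : c.unop ⟶ R.X (i + 2), rfl⟩
      change (u ≫ R.d (i + 1)) ≫ R.d i = 0
      rw [Category.assoc, R.d_comp_d, Limits.comp_zero]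

theorem hasKernel_of_isSplitEpi [IsIdempotentComplete C] {Y X : C} (δ : Y ⟶ X) [IsSplitEpi δ] :
    HasKernel δ := by
  let p := 𝟙 Y - δ ≫ section_ δ
  have hpδ : p ≫ δ = 0 := by simp [p]
  obtain ⟨R, i, r, hir, hri⟩ := IsIdempotentComplete.idempotents_split Y p (by simp [p])
  have hi : i ≫ δ = 0 := by
    rw [← Category.id_comp i, ← hir, Category.assoc, Category.assoc, reassoc_of% hri, hpδ,
      Limits.comp_zero]
  refine HasLimit.mk ⟨_, KernelFork.IsLimit.ofι i hi (fun z _ => z ≫ r) (fun z hz => ?_)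
    (fun z _ m hm => ?_)⟩
  · rw [Category.assoc, hri]
    simp [p, reassoc_of% hz]
  · rw [← hm, Category.assoc, hir, Category.comp_id]

lemma preadditiveYoneda_app_comp {X V W : C} {N : Cᵒᵖ ⥤ AddCommGrpCat.{v}}
    (σ : preadditiveYoneda.obj X ⟶ N) (x : W ⟶ V) (g : V ⟶ X) :
    σ.app (op W) (x ≫ g) = N.map x.op (σ.app (op V) g) :=
  NatTrans.naturality_apply σ x.op g

namespace RepResolution

section ChainMap

variable {A M : Cᵒᵖ ⥤ AddCommGrpCat.{v}} (P : RepResolution A) (Q : RepResolution M)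

theorem exists_chainMap_of_base (f₀ : P.X 0 ⟶ Q.X 0) (f₁ : P.X 1 ⟶ Q.X 1)
    (h : f₁ ≫ Q.d 0 = P.d 0 ≫ f₀) :
    ∃ f : ∀ i, P.X i ⟶ Q.X i, f 0 = f₀ ∧ ∀ i, f (i + 1) ≫ Q.d i = P.d i ≫ f i := by
  choose g hg using fun i (w : P.X (i + 2) ⟶ Q.X (i + 1)) => Q.exists_comp_d_succ i w
  -- the recursion carries two consecutive components: lifting `f (i + 2)` uses the square at `i`
  let S : ∀ i, Σ' (a : P.X i ⟶ Q.X i) (b : P.X (i + 1) ⟶ Q.X (i + 1)), b ≫ Q.d i = P.d i ≫ a :=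
    fun i => Nat.rec ⟨f₀, f₁, h⟩ (fun i s => ⟨s.2.1, g i (P.d (i + 1) ≫ s.2.1) (by
      rw [Category.assoc, s.2.2, ← Category.assoc, P.d_comp_d, Limits.zero_comp]), hg _ _ _⟩) i
  exact ⟨fun i => (S i).1, rfl, fun i => (S i).2.2⟩

theorem exists_chainMap (e : A ⟶ M) :
    ∃ f : ∀ i, P.X i ⟶ Q.X i, (∀ {W : C} (x : W ⟶ P.X 0),
      Q.ε.app (op W) (x ≫ f 0) = e.app (op W) (P.ε.app (op W) x)) ∧
      ∀ i, f (i + 1) ≫ Q.d i = P.d i ≫ f i := by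
  obtain ⟨f₀ : P.X 0 ⟶ Q.X 0, hf₀⟩ := Q.surjective_ε _ (e.app _ (P.ε.app _ (𝟙 (P.X 0))))
  have base {W : C} (x : W ⟶ P.X 0) :
      Q.ε.app (op W) (x ≫ f₀) = e.app (op W) (P.ε.app (op W) x) := by
    rw [preadditiveYoneda_app_comp, hf₀, ← NatTrans.naturality_apply, ← preadditiveYoneda_app_comp,
      Category.comp_id]
  obtain ⟨f₁, hf₁⟩ := Q.exists_comp_d_zero (P.d 0 ≫ f₀)
    (by rw [base, ← Category.id_comp (P.d 0), P.ε_app_comp_d, map_zero])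
  obtain ⟨f, rfl, hf⟩ := P.exists_chainMap_of_base Q f₀ f₁ hf₁
  exact ⟨f, base, hf⟩

section Cone

variable [HasBinaryBiproducts C] (f : ∀ i, P.X i ⟶ Q.X i)

noncomputable def coneD (i : ℕ) : P.X (i + 1) ⊞ Q.X (i + 2) ⟶ P.X i ⊞ Q.X (i + 1) :=
  biprod.lift (-(biprod.fst ≫ P.d i)) (biprod.desc (f (i + 1)) (Q.d (i + 1)))

variable {P Q f}

lemma coneD_comp_desc (hf : ∀ i, f (i + 1) ≫ Q.d i = P.d i ≫ f i) (i : ℕ) :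
    P.coneD Q f i ≫ biprod.desc (f i) (Q.d i) = 0 := by
  simp [coneD, biprod.desc_eq, hf, Q.d_comp_d]

lemma coneD_comp_coneD (hf : ∀ i, f (i + 1) ≫ Q.d i = P.d i ≫ f i) (i : ℕ) :
    P.coneD Q f (i + 1) ≫ P.coneD Q f i = 0 := by
  apply biprod.hom_ext
  · simp [coneD, P.d_comp_d]
  · simpa [coneD] using coneD_comp_desc hf (i + 1)

lemma exists_comp_coneD (hf : ∀ i, f (i + 1) ≫ Q.d i = P.d i ≫ f i) {W : C} (i : ℕ)
    (z : W ⟶ P.X i ⊞ Q.X (i + 1)) (w : W ⟶ P.X (i + 1)) (hw : w ≫ P.d i = z ≫ biprod.fst)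
    (hz : z ≫ biprod.desc (f i) (Q.d i) = 0) : ∃ z', z' ≫ P.coneD Q f i = z := by
  obtain ⟨v, hv⟩ := Q.exists_comp_d_succ i (z ≫ biprod.snd + w ≫ f (i + 1)) (by
    simpa [biprod.desc_eq, hf, reassoc_of% hw, add_comm] using hz)
  refine ⟨biprod.lift (-w) v, biprod.hom_ext _ _ ?_ ?_⟩
  · simp [coneD, hw]
  · simp [coneD, hv]

lemma exists_comp_coneD_succ (hf : ∀ i, f (i + 1) ≫ Q.d i = P.d i ≫ f i) {W : C} (i : ℕ)
    (z : W ⟶ P.X (i + 1) ⊞ Q.X (i + 2)) (hz : z ≫ P.coneD Q f i = 0) :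
    ∃ z', z' ≫ P.coneD Q f (i + 1) = z := by
  obtain ⟨w, hw⟩ := P.exists_comp_d_succ i (z ≫ biprod.fst) (by
    simpa [coneD] using congr_arg (· ≫ biprod.fst) hz)
  exact exists_comp_coneD hf (i + 1) z w hw (by simpa [coneD] using congr_arg (· ≫ biprod.snd) hz)

end Cone

end ChainMap

section Kernel

variable [HasBinaryBiproducts C] {A M K : Cᵒᵖ ⥤ AddCommGrpCat.{v}} {P : RepResolution A}
  {Q : RepResolution M} {k : K ⟶ A} {e : A ⟶ M} {f : ∀ i, P.X i ⟶ Q.X i}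

lemma exists_comp_desc_eq (he : ∀ c, Function.Surjective (e.app c))
    (hf₀ : ∀ {W : C} (x : W ⟶ P.X 0), Q.ε.app (op W) (x ≫ f 0) = e.app _ (P.ε.app _ x))
    {W : C} (y : W ⟶ Q.X 0) : ∃ z, z ≫ biprod.desc (f 0) (Q.d 0) = y := by
  obtain ⟨a, ha⟩ := he _ (Q.ε.app (op W) y)
  obtain ⟨x : W ⟶ P.X 0, rfl⟩ := P.surjective_ε W a
  obtain ⟨u, hu⟩ := Q.exists_comp_d_zero (y - x ≫ f 0) (by erw [map_sub, hf₀, ha, sub_self])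
  exact ⟨biprod.lift x u, by simp [hu]⟩

lemma exists_augmentation {R : C} (ι₀ : R ⟶ P.X 0 ⊞ Q.X 1)
    (hι₀ : ι₀ ≫ biprod.desc (f 0) (Q.d 0) = 0) (hk : ∀ c, Function.Injective (k.app c))
    (hke : ∀ c, Function.Exact (k.app c) (e.app c))
    (hf₀ : ∀ {W : C} (x : W ⟶ P.X 0), Q.ε.app (op W) (x ≫ f 0) = e.app _ (P.ε.app _ x)) :
    ∃ ε : preadditiveYoneda.obj R ⟶ K, ∀ {W : C} (r : W ⟶ R),
      k.app (op W) (ε.app (op W) r) = P.ε.app (op W) (r ≫ ι₀ ≫ biprod.fst) := by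
  have hzero : (preadditiveYoneda.map (ι₀ ≫ biprod.fst) ≫ P.ε) ≫ e = 0 := by
    ext c (r : c.unop ⟶ R)
    change e.app c (P.ε.app c (r ≫ ι₀ ≫ biprod.fst)) = 0
    have hr : r ≫ ι₀ ≫ biprod.fst ≫ f 0 + r ≫ ι₀ ≫ biprod.snd ≫ Q.d 0 = 0 := by
      simpa [biprod.desc_eq] using r ≫= hι₀
    rw [← hf₀, Category.assoc, Category.assoc, eq_neg_of_add_eq_zero_left hr,
      ← Preadditive.neg_comp]
    simp only [← Category.assoc]
    exact Q.ε_app_comp_d _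
  obtain ⟨ε, hε⟩ := exists_lift_of_exact_app k e hk hke _ hzero
  exact ⟨ε, fun r => app_app_apply_of_comp_eq hε _ r⟩

theorem nonempty_of_shortExact [IsIdempotentComplete C] (P : RepResolution A)
    (Q : RepResolution M) (hk : ∀ c, Function.Injective (k.app c))
    (hke : ∀ c, Function.Exact (k.app c) (e.app c)) (he : ∀ c, Function.Surjective (e.app c)) :
    Nonempty (RepResolution K) := by
  obtain ⟨f, hf₀, hf⟩ := P.exists_chainMap Q e
  obtain ⟨s, hs⟩ := exists_comp_desc_eq he hf₀ (𝟙 (Q.X 0))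
  have : IsSplitEpi (biprod.desc (f 0) (Q.d 0)) := IsSplitEpi.mk' ⟨s, hs⟩
  have := hasKernel_of_isSplitEpi (biprod.desc (f 0) (Q.d 0))
  set δ := biprod.desc (f 0) (Q.d 0)
  obtain ⟨ε, hε⟩ := exists_augmentation (kernel.ι δ) (kernel.condition δ) hk hke hf₀
  let X : ℕ → C := fun i => Nat.casesOn i (kernel δ) fun j => P.X (j + 1) ⊞ Q.X (j + 2)
  let d : ∀ i, X (i + 1) ⟶ X i := fun i => Nat.casesOn (motive := fun i => X (i + 1) ⟶ X i) i
    (kernel.lift δ (P.coneD Q f 0) (coneD_comp_desc hf 0)) fun j => P.coneD Q f (j + 1)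
  refine ⟨⟨X, d, ε, fun W x => ?_, fun u => ?_, fun w hw => ?_, fun i => ?_, fun i w hw => ?_⟩⟩
  · obtain ⟨a : W ⟶ P.X 0, ha⟩ := P.surjective_ε W (k.app _ x)
    obtain ⟨u, hu⟩ := Q.exists_comp_d_zero (a ≫ f 0) (by rw [hf₀, ha, (hke _).apply_apply_eq_zero])
    have hz : biprod.lift a (-u) ≫ δ = 0 := by simp [δ, hu]
    exact ⟨kernel.lift δ _ hz, hk _ (by rw [hε, kernel.lift_ι_assoc, biprod.lift_fst, ha])⟩
  · apply hk _
    rw [hε, map_zero]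
    have hu : (u ≫ d 0) ≫ kernel.ι δ ≫ biprod.fst = (-(u ≫ biprod.fst)) ≫ P.d 0 := by
      simp [d, coneD]
    rw [hu, P.ε_app_comp_d]
  · obtain ⟨a, ha⟩ := P.exists_comp_d_zero _ (by rw [← hε, hw, map_zero])
    obtain ⟨z, hz⟩ := exists_comp_coneD hf 0 (w ≫ kernel.ι δ) a (by rw [ha, Category.assoc])
      (by simp [δ])
    exact ⟨z, (cancel_mono (kernel.ι δ)).1 (by simpa [d] using hz)⟩
  · cases i with
    | zero => exact (cancel_mono (kernel.ι δ)).1 (by simpa [d] using coneD_comp_coneD hf 0)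
    | succ j => exact coneD_comp_coneD hf (j + 1)
  · cases i with
    | zero => exact exists_comp_coneD_succ hf 0 w (by simpa [d] using hw =≫ kernel.ι δ)
    | succ j => exact exists_comp_coneD_succ hf (j + 1) w hw

end Kernel

end RepResolution

theorem finitelyResolved_kernel [HasBinaryBiproducts C] [IsIdempotentComplete C]
    {A M : Cᵒᵖ ⥤ AddCommGrpCat.{v}} (g : A ⟶ M) (hA : FinitelyResolved A)
    (hI : FinitelyResolved (image g)) : FinitelyResolved (kernel g) := by
  rw [finitelyResolved_iff_nonempty_repResolution] at *
  obtain ⟨P⟩ := hA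
  obtain ⟨Q⟩ := hI
  refine P.nonempty_of_shortExact Q (injective_app_of_mono (kernel.ι g)) (fun c a => ?_)
    (surjective_app_of_epi (factorThruImage g))
  rw [← exact_app_kernel_ι g c a, ← app_app_apply_of_comp_eq (image.fac g) c a]
  exact ((injective_app_of_mono (image.ι g) c).eq_iff' (map_zero _)).symm

section ExtClosed

variable {𝓕 : Set (Cᵒᵖ ⥤ AddCommGrpCat.{v})} {F G H A K : Cᵒᵖ ⥤ AddCommGrpCat.{v}}
  {ι : F ⟶ G} {π : G ⟶ H} {α : A ⟶ G} {k : K ⟶ A} {κ : K ⟶ F}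

theorem ExtClosed.image_mem (h𝓕 : ExtClosed 𝓕) (hι : ∀ c, Function.Injective (ι.app c))
    (hιπ : ∀ c, Function.Exact (ι.app c) (π.app c))
    (hk : ∀ c, Function.Exact (k.app c) ((α ≫ π).app c)) (hκ : κ ≫ ι = k ≫ α)
    (hIκ : image κ ∈ 𝓕) (hIβ : image (α ≫ π) ∈ 𝓕) : image α ∈ 𝓕 := by
  let sq₁ : Arrow.mk κ ⟶ Arrow.mk α := Arrow.homMk k ι hκ.symm
  let sq₂ : Arrow.mk α ⟶ Arrow.mk (α ≫ π) := Arrow.homMk (𝟙 A) π (by simp)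
  have key c := image_sequence_shortExact (hι c) (hιπ c) (fun a => rfl) (hk c)
    (app_app_apply_of_comp_eq_comp hκ c) (injective_app_of_mono (image.ι κ) c)
    (app_app_apply_of_comp_eq (image.fac κ) c)
    (surjective_app_of_epi (factorThruImage α) c) (injective_app_of_mono (image.ι α) c)
    (app_app_apply_of_comp_eq (image.fac α) c) (surjective_app_of_epi (factorThruImage (α ≫ π)) c)
    (injective_app_of_mono (image.ι (α ≫ π)) c) (app_app_apply_of_comp_eq (image.fac (α ≫ π)) c)
    (app_app_apply_of_comp_eq_comp (image.map_ι sq₁) c)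
    (app_app_apply_of_comp_eq_comp (image.map_ι sq₂) c)
  exact h𝓕 (image.map sq₁) (image.map sq₂) (fun c => (key c).1) (fun c => (key c).2.1)
    (fun c => (key c).2.2) hIκ hIβ

theorem ExtClosed.cokernel_mem (h𝓕 : ExtClosed 𝓕) (hι : ∀ c, Function.Injective (ι.app c))
    (hιπ : ∀ c, Function.Exact (ι.app c) (π.app c)) (hπ : ∀ c, Function.Surjective (π.app c))
    (hk : ∀ c, Function.Exact (k.app c) ((α ≫ π).app c)) (hκ : κ ≫ ι = k ≫ α)
    (hCκ : cokernel κ ∈ 𝓕) (hCβ : cokernel (α ≫ π) ∈ 𝓕) : cokernel α ∈ 𝓕 := by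
  let u := cokernel.map κ α k ι hκ
  let v := cokernel.map α (α ≫ π) (𝟙 A) π (by simp)
  have hu : cokernel.π κ ≫ u = ι ≫ cokernel.π α := by simp [u]
  have hv : cokernel.π α ≫ v = π ≫ cokernel.π (α ≫ π) := by simp [v]
  have key c := cokernel_sequence_shortExact (hι c) (hιπ c) (hπ c) (fun a => rfl) (hk c)
    (app_app_apply_of_comp_eq_comp hκ c) (surjective_app_of_epi (cokernel.π κ) c)
    (exact_app_cokernel_π κ c) (surjective_app_of_epi (cokernel.π α) c)
    (exact_app_cokernel_π α c) (surjective_app_of_epi (cokernel.π (α ≫ π)) c)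
    (exact_app_cokernel_π (α ≫ π) c) (app_app_apply_of_comp_eq hu c)
    (app_app_apply_of_comp_eq hv c)
  exact h𝓕 u v (fun c => (key c).1) (fun c => (key c).2.1) (fun c => (key c).2.2) hCκ hCβ

end ExtClosed

end Representable

theorem stmt15_general {C : Type u} [Category.{v} C] [Preadditive C]
    [HasBinaryBiproducts C] [IsIdempotentComplete C]
    (n : ℕ) (𝓕 : Set (Cᵒᵖ ⥤ AddCommGrpCat.{v}))
    (hsub : ∀ F ∈ 𝓕, MemExN n F) (hext : ExtClosed 𝓕) :
    ExtClosed (PbOp 𝓕) := by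
  rintro F G H ι π hι hιπ hπ ⟨hF, hFPb⟩ ⟨hH, hHPb⟩
  refine ⟨hext ι π hι hιπ hπ hF hH, fun A α hA => ?_⟩
  obtain ⟨hIβ, hCβ⟩ := hHPb A (α ≫ π) hA
  have hK : FinitelyResolved (kernel (α ≫ π)) := finitelyResolved_kernel _ hA (hsub _ hIβ).1
  obtain ⟨κ, hκ⟩ := exists_lift_of_exact_app ι π hι hιπ (kernel.ι (α ≫ π) ≫ α) (by simp)
  obtain ⟨hIκ, hCκ⟩ := hFPb _ κ hK
  exact ⟨hext.image_mem hι hιπ (exact_app_kernel_ι _) hκ hIκ hIβ,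
    hext.cokernel_mem hι hιπ hπ (exact_app_kernel_ι _) hκ hCκ hCβ⟩

theorem stmt15 {C : Type u} [Category.{v} C] [Preadditive C]
    [HasZeroObject C] [HasBinaryBiproducts C] [IsIdempotentComplete C]
    (n : ℕ) (hn : 1 ≤ n) (𝓕 : Set (Cᵒᵖ ⥤ AddCommGrpCat.{v}))
    (hsub : ∀ F ∈ 𝓕, MemExN n F) (hiso : IsoClosedSet 𝓕) (hext : ExtClosed 𝓕) :
    ExtClosed (PbOp 𝓕) :=
  stmt15_general n 𝓕 hsub hext
end
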